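/- Let h > 0, let N be a nonnegative integer, and let q̃ : ℝ → ℝ satisfy q̃(kh) > 0 for every integer k with −N ≤ k ≤ N. Then the (2N+1)×(2N+1) real matrix A indexed by j, k ∈ {−N, …, N} with entries A_{jk} = −(1/h²)·sinc''(k−j) + q̃(kh)·δ_{jk} (where δ_{jk} is the Kronecker delta and sinc(x) = sin(πx)/(πx) with sinc(0) = 1) is symmetric positive definite. -/

import Mathlib

open Real

/-- The sinc function: sinc(x) = sin(πx)/(πx) for x ≠ 0, sinc(0) = 1. -/
noncomputable def sinc (x : ℝ) : ℝ := if x = 0 then 1 else Real.sin (π * x) / (π * x)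

/-!
Differentiating `sinc x = π⁻¹ ∫₀^π cos (x t) dt` twice under the integral sign gives
`-sinc'' x = π⁻¹ ∫₀^π t² cos (x t) dt`. Expanding `cos ((c k - c j) t)` with the subtraction
formula, the quadratic form of `(-sinc'' (c k - c j))` becomes
`π⁻¹ ∫₀^π t² ((∑ x j cos (c j t))² + (∑ x j sin (c j t))²) dt ≥ 0`, so the Sinc part of
the matrix is positive semidefinite, and adding the positive diagonal of `q̃` makes it positive
definite.
-/

open intervalIntegral Finset
open scoped Matrix

theorem hasDerivAt_integral_mul_comp_mul {f f' g : ℝ → ℝ} {C a b : ℝ}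
    (hf : ∀ y, HasDerivAt f (f' y) y) (hf' : Continuous f') (hf'C : ∀ y, |f' y| ≤ C)
    (hg : Continuous g) (x : ℝ) :
    HasDerivAt (fun x => ∫ t in a..b, g t * f (x * t)) (∫ t in a..b, g t * t * f' (x * t)) x := by
  have hfc : Continuous f := continuous_iff_continuousAt.2 fun y => (hf y).continuousAt
  refine (hasDerivAt_integral_of_dominated_loc_of_deriv_le (μ := MeasureTheory.volume)
    (F := fun x t => g t * f (x * t)) (F' := fun x t => g t * t * f' (x * t))
    (bound := fun t => |g t * t| * C) (s := Set.univ) Filter.univ_mem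
    (.of_forall fun y => ?_) ?_ ?_ (.of_forall fun t _ y _ => ?_) ?_
    (.of_forall fun t _ y _ => ?_)).2
  · exact (hg.mul (hfc.comp (continuous_const.mul continuous_id))).aestronglyMeasurable
  · exact (hg.mul (hfc.comp (continuous_const.mul continuous_id))).intervalIntegrable _ _
  · exact ((hg.mul continuous_id).mul
      (hf'.comp (continuous_const.mul continuous_id))).aestronglyMeasurable
  · rw [Real.norm_eq_abs, abs_mul]
    exact mul_le_mul_of_nonneg_left (hf'C _) (abs_nonneg _)
  · exact ((hg.mul continuous_id).abs.mul continuous_const).intervalIntegrable _ _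
  · have := ((hf (y * t)).comp y ((hasDerivAt_id y).mul_const t)).const_mul (g t)
    simpa [mul_comm, mul_left_comm, mul_assoc] using this

theorem sum_sum_mul_mul_cos_sub {ι : Type*} [Fintype ι] (x c : ι → ℝ) :
    ∑ j, ∑ k, x j * x k * cos (c k - c j) =
      (∑ j, x j * cos (c j)) ^ 2 + (∑ j, x j * sin (c j)) ^ 2 := by
  simp only [sq, sum_mul_sum, ← sum_add_distrib, cos_sub]
  exact sum_congr rfl fun j _ => sum_congr rfl fun k _ => by ring

theorem posSemidef_integral_mul_cos_sub {ι : Type*} [Fintype ι] {w : ℝ → ℝ} {a b : ℝ}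
    (hab : a ≤ b) (hw : IntervalIntegrable w MeasureTheory.volume a b)
    (hw_nonneg : ∀ t ∈ Set.Icc a b, 0 ≤ w t) (c : ι → ℝ) :
    (Matrix.of fun j k => ∫ t in a..b, w t * cos ((c k - c j) * t)).PosSemidef := by
  refine Matrix.posSemidef_iff_dotProduct_mulVec.2 ⟨?_, fun x => ?_⟩
  · ext j k
    simp only [Matrix.conjTranspose_apply, Matrix.of_apply, star_trivial]
    simp only [← neg_sub (c k), neg_mul, cos_neg]
  · calc 0 ≤ ∫ t in a..b, w t * ∑ j, ∑ k, x j * x k * cos (c k * t - c j * t) := by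
          refine integral_nonneg hab fun t ht => mul_nonneg (hw_nonneg t ht) ?_
          rw [sum_sum_mul_mul_cos_sub]
          positivity
      _ = ∑ p : ι × ι, ∫ t in a..b, w t * (x p.1 * x p.2 * cos (c p.2 * t - c p.1 * t)) := by
          simp only [mul_sum, ← Fintype.sum_prod_type']
          exact integral_finsetSum fun p _ => hw.mul_continuousOn (by fun_prop)
      _ = star x ⬝ᵥ (Matrix.of fun j k => ∫ t in a..b, w t * cos ((c k - c j) * t)) *ᵥ x := by
          rw [Fintype.sum_prod_type]
          simp only [star_trivial, dotProduct, Matrix.mulVec, Matrix.of_apply, mul_sum]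
          refine sum_congr rfl fun j _ => sum_congr rfl fun k _ => ?_
          rw [← integral_mul_const, ← integral_const_mul]
          refine integral_congr fun t _ => ?_
          simp only [sub_mul]
          ring

theorem sinc_eq_integral_cos (x : ℝ) : _root_.sinc x = ∫ t in (0 : ℝ)..π, π⁻¹ * cos (x * t) := by
  rcases eq_or_ne x 0 with rfl | hx
  · simp [_root_.sinc, pi_ne_zero]
  · rw [integral_const_mul, integral_comp_mul_left (fun t => cos t) hx]
    simp only [_root_.sinc, hx, ↓reduceIte, mul_comm x, zero_mul, integral_cos, sin_zero,
      sub_zero, smul_eq_mul]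
    field_simp

theorem neg_iteratedDeriv_two_sinc (x : ℝ) :
    -iteratedDeriv 2 _root_.sinc x = ∫ t in (0 : ℝ)..π, π⁻¹ * t * t * cos (x * t) := by
  have hderiv : deriv _root_.sinc = fun x => ∫ t in (0 : ℝ)..π, π⁻¹ * t * -sin (x * t) := by
    rw [funext sinc_eq_integral_cos]
    funext y
    exact (hasDerivAt_integral_mul_comp_mul hasDerivAt_cos continuous_sin.neg
      (fun y => by simpa using abs_sin_le_one y) continuous_const y).deriv
  have hderiv2 := hasDerivAt_integral_mul_comp_mul (a := 0) (b := π) (g := fun t => π⁻¹ * t)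
    (f := fun y => -sin y) (fun y => (hasDerivAt_sin y).neg) continuous_cos.neg
    (fun y => by simpa using abs_cos_le_one y) (by fun_prop) x
  rw [iteratedDeriv_succ, iteratedDeriv_one, hderiv, hderiv2.deriv, ← integral_neg]
  simp only [mul_neg, neg_neg]

theorem sinc_collocation_matrix_posDef_general (h : ℝ) (N : ℕ) (qt : ℝ → ℝ)
    (hq : ∀ k : ℤ, -(N : ℤ) ≤ k → k ≤ N → 0 < qt (k * h)) :
    (Matrix.of fun j k : Fin (2 * N + 1) =>
        -(1 / h ^ 2) *
            iteratedDeriv 2 _root_.sinc (((((k : ℤ) - N) - ((j : ℤ) - N) : ℤ) : ℝ)) +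
          if j = k then qt ((((k : ℤ) - N : ℤ) : ℝ) * h) else 0).PosDef := by
  set c : Fin (2 * N + 1) → ℝ := fun j => (((j : ℤ) - N : ℤ) : ℝ)
  have hK := posSemidef_integral_mul_cos_sub pi_pos.le (w := fun t => π⁻¹ * t * t)
    ((by fun_prop : Continuous _).intervalIntegrable _ _)
    (fun t ht => mul_nonneg (mul_nonneg (inv_nonneg.2 pi_pos.le) ht.1) ht.1) c
  have hD : (Matrix.diagonal fun k => qt (c k * h)).PosDef :=
    .diagonal fun k => hq _ (by omega) (by omega)
  convert Matrix.PosDef.posSemidef_add (hK.smul (one_div_nonneg.2 (sq_nonneg h))) hD using 1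
  ext j k
  simp only [Matrix.of_apply, Matrix.add_apply, Matrix.smul_apply, Matrix.diagonal_apply,
    smul_eq_mul, neg_mul_comm, neg_iteratedDeriv_two_sinc, c]
  push_cast
  split_ifs with hjk <;> simp only [hjk]

/-- for h > 0 and q̃ with q̃(kh) > 0 for all integers −N ≤ k ≤ N, the
(2N+1)×(2N+1) matrix with entries A_{jk} = −(1/h²)·sinc''(k−j) + q̃(kh)·δ_{jk}
(indices j,k ∈ {−N,…,N}) is symmetric positive definite. -/
theorem sinc_collocation_matrix_posDef (h : ℝ) (hh : 0 < h) (N : ℕ) (qt : ℝ → ℝ)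
    (hq : ∀ k : ℤ, -(N : ℤ) ≤ k → k ≤ N → 0 < qt (k * h)) :
    (Matrix.of fun j k : Fin (2 * N + 1) =>
        -(1 / h ^ 2) *
            iteratedDeriv 2 _root_.sinc (((((k : ℤ) - N) - ((j : ℤ) - N) : ℤ) : ℝ)) +
          if j = k then qt ((((k : ℤ) - N : ℤ) : ℝ) * h) else 0).PosDef :=
  sinc_collocation_matrix_posDef_general h N qt hq
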